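/- Let n ≥ 1 and let J : ℝⁿ → (ℝⁿ →L[ℝ] ℝⁿ) be a twice continuously differentiable field of endomorphisms with J(x)² = −id for every x, whose Nijenhuis expression vanishes identically: for all x and all u, w ∈ ℝⁿ, (DJ)(x)(J(x)u)(w) − (DJ)(x)(J(x)w)(u) − J(x)((DJ)(x)(u)(w)) + J(x)((DJ)(x)(w)(u)) = 0. Writing J_k^l(x) = ⟨J(x) e_k, e_l⟩ for the components in the standard basis and ∂_p for the partial derivative in direction e_p (with the summation convention over repeated indices, indices raised and lowered with the standard Euclidean metric), the following identity holds for all x and all j, l: ∑_k ∂_k ∂_j J_k^l − ∑_k ∂_k ∂_k J_j^l + ∑_k ∂_k [ J_i^l J_j^p ∂_p J_k^i − J_i^l J_k^p ∂_p J_j^i ] = 0. (This is the identity 0 = D^k( J_i^l N_{jk}^i ) = D^k D_j J_k^l − D^k D_k J_j^l + D^k[ J_i^l J_j^p D_p J_k^i − J_i^l J_k^p D_p J_j^i ], specialized to flat space, used in the proof of Proposition 3.2 to replace D^k D_j J_k^l by the rough Laplacian of J.) -/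

import Mathlib

/-!
Applying `J` to the Nijenhuis expression at `(e_j, e_k)` and using `J² = -1` gives, pointwise,
`J_i^l J_j^p ∂_p J_k^i - J_i^l J_k^p ∂_p J_j^i = ∂_k J_j^l - ∂_j J_k^l`.
So the last sum is `∑_k ∂_k (∂_k J_j^l - ∂_j J_k^l)`, which cancels the first two sums by
linearity of `∂_k`.
-/

/-- Partial derivative in the direction of the `p`-th standard basis vector. -/
noncomputable def pd {n : ℕ} (p : Fin n)
    (f : EuclideanSpace ℝ (Fin n) → ℝ) (x : EuclideanSpace ℝ (Fin n)) : ℝ :=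
  fderiv ℝ f x (EuclideanSpace.single p 1)

/-- The component `J_k^l(x) = ⟨J(x) e_k, e_l⟩` of a field of endomorphisms. -/
noncomputable def Jc {n : ℕ}
    (J : EuclideanSpace ℝ (Fin n) → (EuclideanSpace ℝ (Fin n) →L[ℝ] EuclideanSpace ℝ (Fin n)))
    (k l : Fin n) (x : EuclideanSpace ℝ (Fin n)) : ℝ :=
  J x (EuclideanSpace.single k 1) l

theorem ContinuousLinearMap.apply_eq_sum_coord_smul {ι F : Type*} [Fintype ι] [DecidableEq ι]
    [AddCommMonoid F] [Module ℝ F] [TopologicalSpace F]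
    (A : EuclideanSpace ℝ ι →L[ℝ] F) (v : EuclideanSpace ℝ ι) :
    A v = ∑ i, v i • A (EuclideanSpace.single i 1) := by
  conv_lhs => rw [← (EuclideanSpace.basisFun ι ℝ).sum_repr v]
  simp

theorem ContinuousLinearMap.apply_coord_eq_sum {ι κ : Type*} [Fintype ι] [DecidableEq ι]
    [Fintype κ] (A : EuclideanSpace ℝ ι →L[ℝ] EuclideanSpace ℝ κ) (v : EuclideanSpace ℝ ι)
    (l : κ) :
    A v l = ∑ i, v i * A (EuclideanSpace.single i 1) l := by
  conv_lhs => rw [A.apply_eq_sum_coord_smul v]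
  simp

theorem nijenhuis_comp_left_eq_zero {E : Type*} [NormedAddCommGroup E] [NormedSpace ℝ E]
    {J : E → E →L[ℝ] E} {x : E} (hJ2 : (J x).comp (J x) = -ContinuousLinearMap.id ℝ E)
    {u w : E}
    (hN : fderiv ℝ J x (J x u) w - fderiv ℝ J x (J x w) u
        - J x (fderiv ℝ J x u w) + J x (fderiv ℝ J x w u) = 0) :
    J x (fderiv ℝ J x (J x u) w) - J x (fderiv ℝ J x (J x w) u)
      + fderiv ℝ J x u w - fderiv ℝ J x w u = 0 := by
  have hJJ : ∀ v, J x (J x v) = -v := fun v => by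
    simpa using congrArg (fun A : E →L[ℝ] E => A v) hJ2
  have h := congrArg (J x) hN
  rw [map_add, map_sub, map_sub, map_zero, hJJ, hJJ] at h
  rw [← h]
  abel

section Coordinates

variable {n : ℕ}
  {J : EuclideanSpace ℝ (Fin n) → (EuclideanSpace ℝ (Fin n) →L[ℝ] EuclideanSpace ℝ (Fin n))}
  {y : EuclideanSpace ℝ (Fin n)}

noncomputable def entryCLM (k l : Fin n) :
    (EuclideanSpace ℝ (Fin n) →L[ℝ] EuclideanSpace ℝ (Fin n)) →L[ℝ] ℝ :=
  (EuclideanSpace.proj l).comp (ContinuousLinearMap.apply ℝ _ (EuclideanSpace.single k 1))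

theorem Jc_eq_comp (k l : Fin n) : Jc J k l = entryCLM k l ∘ J := rfl

theorem pd_Jc (hJ : DifferentiableAt ℝ J y) (p k l : Fin n) :
    pd p (Jc J k l) y
      = fderiv ℝ J y (EuclideanSpace.single p 1) (EuclideanSpace.single k 1) l := by
  rw [pd, Jc_eq_comp, fderiv_comp y (entryCLM k l).differentiableAt hJ,
    ContinuousLinearMap.fderiv]
  rfl

theorem differentiable_pd_Jc (hJ : ContDiff ℝ 2 J) (p k l : Fin n) :
    Differentiable ℝ (pd p (Jc J k l)) := by
  have hJ1 : Differentiable ℝ J := hJ.differentiable (by norm_num)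
  have hDJ : Differentiable ℝ (fderiv ℝ J) :=
    (hJ.fderiv_right (m := 1) le_rfl).differentiable one_ne_zero
  have : pd p (Jc J k l) = fun y => entryCLM k l (fderiv ℝ J y (EuclideanSpace.single p 1)) :=
    funext fun y => pd_Jc (hJ1 y) p k l
  rw [this]
  fun_prop

theorem pd_sub {p : Fin n} {f g : EuclideanSpace ℝ (Fin n) → ℝ} {x : EuclideanSpace ℝ (Fin n)}
    (hf : DifferentiableAt ℝ f x) (hg : DifferentiableAt ℝ g x) :
    pd p (fun y => f y - g y) x = pd p f x - pd p g x := by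
  simp only [pd, fderiv_fun_sub hf hg, sub_apply]

theorem fderiv_apply_single_coord_eq_sum_pd_Jc (hJ : DifferentiableAt ℝ J y)
    (v : EuclideanSpace ℝ (Fin n)) (k i : Fin n) :
    fderiv ℝ J y v (EuclideanSpace.single k 1) i = ∑ p, v p * pd p (Jc J k i) y := by
  rw [(fderiv ℝ J y).apply_eq_sum_coord_smul v]
  simp [pd_Jc hJ]

theorem apply_fderiv_apply_single_coord (hJ : DifferentiableAt ℝ J y)
    (v : EuclideanSpace ℝ (Fin n)) (k l : Fin n) :
    J y (fderiv ℝ J y v (EuclideanSpace.single k 1)) l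
      = ∑ i, ∑ p, Jc J i l y * v p * pd p (Jc J k i) y := by
  rw [(J y).apply_coord_eq_sum]
  refine Finset.sum_congr rfl fun i _ => ?_
  rw [fderiv_apply_single_coord_eq_sum_pd_Jc hJ, Finset.sum_mul]
  exact Finset.sum_congr rfl fun p _ => by unfold Jc; ring

theorem sum_Jc_mul_pd_Jc_sub_sum (hJ : DifferentiableAt ℝ J y)
    (hJ2 : (J y).comp (J y) = -ContinuousLinearMap.id ℝ (EuclideanSpace ℝ (Fin n)))
    (hN : ∀ u w : EuclideanSpace ℝ (Fin n),
      fderiv ℝ J y (J y u) w - fderiv ℝ J y (J y w) u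
        - J y (fderiv ℝ J y u w) + J y (fderiv ℝ J y w u) = 0)
    (j k l : Fin n) :
    (∑ i, ∑ p, Jc J i l y * Jc J j p y * pd p (Jc J k i) y)
      - ∑ i, ∑ p, Jc J i l y * Jc J k p y * pd p (Jc J j i) y
      = pd k (Jc J j l) y - pd j (Jc J k l) y := by
  have h := congrArg (· l) (nijenhuis_comp_left_eq_zero hJ2
    (hN (EuclideanSpace.single j 1) (EuclideanSpace.single k 1)))
  simp only [PiLp.sub_apply, PiLp.add_apply, PiLp.zero_apply,
    apply_fderiv_apply_single_coord hJ, ← pd_Jc hJ] at h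
  unfold Jc at h ⊢
  linarith

end Coordinates

theorem div_nijenhuis_identity_general {n : ℕ}
    (J : EuclideanSpace ℝ (Fin n) → (EuclideanSpace ℝ (Fin n) →L[ℝ] EuclideanSpace ℝ (Fin n)))
    (hC2 : ContDiff ℝ 2 J)
    (hJ2 : ∀ x, (J x).comp (J x) = -ContinuousLinearMap.id ℝ (EuclideanSpace ℝ (Fin n)))
    (hN : ∀ (x u w : EuclideanSpace ℝ (Fin n)),
      fderiv ℝ J x (J x u) w - fderiv ℝ J x (J x w) u
        - J x (fderiv ℝ J x u w) + J x (fderiv ℝ J x w u) = 0) :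
    ∀ (x : EuclideanSpace ℝ (Fin n)) (j l : Fin n),
      (∑ k, pd k (pd j (Jc J k l)) x)
        - (∑ k, pd k (pd k (Jc J j l)) x)
        + (∑ k, pd k (fun y =>
            (∑ i, ∑ p, Jc J i l y * Jc J j p y * pd p (Jc J k i) y)
              - ∑ i, ∑ p, Jc J i l y * Jc J k p y * pd p (Jc J j i) y) x) = 0 := by
  intro x j l
  have hJ : Differentiable ℝ J := hC2.differentiable (by norm_num)
  have hdiv : ∀ k, pd k (fun y =>
        (∑ i, ∑ p, Jc J i l y * Jc J j p y * pd p (Jc J k i) y)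
          - ∑ i, ∑ p, Jc J i l y * Jc J k p y * pd p (Jc J j i) y) x
      = pd k (pd k (Jc J j l)) x - pd k (pd j (Jc J k l)) x := fun k => by
    simp only [sum_Jc_mul_pd_Jc_sub_sum (hJ _) (hJ2 _) (hN _)]
    exact pd_sub (differentiable_pd_Jc hC2 k j l x) (differentiable_pd_Jc hC2 j k l x)
  simp only [hdiv, Finset.sum_sub_distrib]
  ring

/-- For an integrable almost complex structure field `J` on flat `ℝⁿ`, the
divergence of the contracted Nijenhuis tensor yields
`0 = D^k D_j J_k^l - D^k D_k J_j^l + D^k [ J_i^l J_j^p ∂_p J_k^i - J_i^l J_k^p ∂_p J_j^i ]`. -/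
theorem div_nijenhuis_identity {n : ℕ} (hn : 1 ≤ n)
    (J : EuclideanSpace ℝ (Fin n) → (EuclideanSpace ℝ (Fin n) →L[ℝ] EuclideanSpace ℝ (Fin n)))
    (hC2 : ContDiff ℝ 2 J)
    (hJ2 : ∀ x, (J x).comp (J x) = -ContinuousLinearMap.id ℝ (EuclideanSpace ℝ (Fin n)))
    (hN : ∀ (x u w : EuclideanSpace ℝ (Fin n)),
      fderiv ℝ J x (J x u) w - fderiv ℝ J x (J x w) u
        - J x (fderiv ℝ J x u w) + J x (fderiv ℝ J x w u) = 0) :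
    ∀ (x : EuclideanSpace ℝ (Fin n)) (j l : Fin n),
      (∑ k, pd k (pd j (Jc J k l)) x)
        - (∑ k, pd k (pd k (Jc J j l)) x)
        + (∑ k, pd k (fun y =>
            (∑ i, ∑ p, Jc J i l y * Jc J j p y * pd p (Jc J k i) y)
              - ∑ i, ∑ p, Jc J i l y * Jc J k p y * pd p (Jc J j i) y) x) = 0 :=
  div_nijenhuis_identity_general J hC2 hJ2 hN
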